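/- In 2S(G;L,R), there exist two words in L of different lengths that are weakly connected to each other (as vertices) if and only if there is a word in L that is weakly connected to the identity e. Moreover, there exists a word in L of length n weakly connected to e if and only if there exists a word in L⁻¹ of length n weakly connected to e. -/

import Mathlib

open Relation

/-- `w` is a product of a list of `n` elements of `S`. -/
def IsWord {G : Type*} [Group G] (S : Set G) (n : ℕ) (w : G) : Prop :=
  ∃ l : List G, l.length = n ∧ (∀ x ∈ l, x ∈ S) ∧ l.prod = w

/-- The set of all positive-length words in `S`. -/
def WordSet {G : Type*} [Group G] (S : Set G) : Set G :=
  {w | ∃ n : ℕ, 0 < n ∧ IsWord S n w}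

/-- Arc of the two-sided group digraph `2S(G;L,R)`. -/
def Arc {G : Type*} [Group G] (L R : Set G) (g h : G) : Prop :=
  ∃ l ∈ L, ∃ r ∈ R, h = l⁻¹ * g * r

/-- Existence of a directed path (possibly of length 0). -/
def DPath {G : Type*} [Group G] (L R : Set G) : G → G → Prop :=
  ReflTransGen (Arc L R)

/-- Weak connectivity: path ignoring directions. -/
def WeakConn {G : Type*} [Group G] (L R : Set G) : G → G → Prop :=
  ReflTransGen (fun g h => Arc L R g h ∨ Arc L R h g)

/-- Strong connectivity of two vertices. -/
def StrongConn {G : Type*} [Group G] (L R : Set G) (g h : G) : Prop :=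
  DPath L R g h ∧ DPath L R h g

/-!
Fix `l₀ ∈ L` and `r₀ ∈ R`, and write `∼` for weak connectivity. The arcs `l * x → x * r` and
`x * r⁻¹ → l⁻¹ * x` give `l * x ∼ x * r` and `l⁻¹ * x ∼ x * r⁻¹`. Peeling off letters, every word
of length `n` in `L` is `∼ r₀ ^ n`, hence `∼ l₀ ^ n`, and every word of length `n` in `L⁻¹` is
`∼ l₀⁻¹ ^ n`. The same two facts carry an arc `g → l'⁻¹ * g * r` to a path under left
multiplication by `l` or by `l⁻¹`, so left multiplication by powers of `l₀` preserves and reflects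
`∼`. Both claims thereby reduce to cancelling powers of `l₀`:
`l₀ ^ m ∼ l₀ ^ (m + d) ↔ 1 ∼ l₀ ^ d` and `l₀ ^ n ∼ 1 ↔ 1 ∼ l₀⁻¹ ^ n`.
-/

section

variable {G : Type*} [Group G] {L R : Set G} {g h l r : G}

theorem WeakConn.refl (g : G) : WeakConn L R g g := ReflTransGen.refl

theorem WeakConn.trans {k : G} (hgh : WeakConn L R g h) (hhk : WeakConn L R h k) :
    WeakConn L R g k :=
  ReflTransGen.trans hgh hhk

theorem WeakConn.symm (hgh : WeakConn L R g h) : WeakConn L R h g := by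
  induction hgh with
  | refl => exact ReflTransGen.refl
  | tail _ hstep ih => exact ReflTransGen.head hstep.symm ih

instance : Trans (WeakConn L R) (WeakConn L R) (WeakConn L R) := ⟨WeakConn.trans⟩

theorem weakConn_mul_left_mul_right (hl : l ∈ L) (hr : r ∈ R) (x : G) :
    WeakConn L R (l * x) (x * r) :=
  .single (.inl ⟨l, hl, r, hr, by group⟩)

theorem weakConn_inv_mul_left_mul_inv_right (hl : l ∈ L) (hr : r ∈ R) (x : G) :
    WeakConn L R (l⁻¹ * x) (x * r⁻¹) :=
  .single (.inr ⟨l, hl, r, hr, by group⟩)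

theorem WeakConn.map {f : G → G}
    (hf : ∀ g h, Arc L R g h → WeakConn L R (f g) (f h)) (hgh : WeakConn L R g h) :
    WeakConn L R (f g) (f h) :=
  ReflTransGen.lift' f (fun _ _ hstep => hstep.elim (hf _ _) fun hhg => (hf _ _ hhg).symm) _ _ hgh

theorem WeakConn.mul_left (hl : l ∈ L) (hgh : WeakConn L R g h) :
    WeakConn L R (l * g) (l * h) := by
  refine hgh.map fun g h ⟨l', hl', r, hr, hh⟩ => ?_
  have hgr : g * r = l' * h := by rw [hh]; group
  calc WeakConn L R (l * g) (g * r) := weakConn_mul_left_mul_right hl hr g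
    _ = l' * h := hgr
    WeakConn L R _ (h * r) := weakConn_mul_left_mul_right hl' hr h
    WeakConn L R _ (l * h) := (weakConn_mul_left_mul_right hl hr h).symm

theorem WeakConn.inv_mul_left (hl : l ∈ L) (hgh : WeakConn L R g h) :
    WeakConn L R (l⁻¹ * g) (l⁻¹ * h) := by
  refine hgh.map fun g h ⟨l', hl', r, hr, hh⟩ => ?_
  have hhr : l'⁻¹ * g = h * r⁻¹ := by rw [hh]; group
  calc WeakConn L R (l⁻¹ * g) (g * r⁻¹) := weakConn_inv_mul_left_mul_inv_right hl hr g
    WeakConn L R _ (l'⁻¹ * g) := (weakConn_inv_mul_left_mul_inv_right hl' hr g).symm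
    _ = h * r⁻¹ := hhr
    WeakConn L R _ (l⁻¹ * h) := (weakConn_inv_mul_left_mul_inv_right hl hr h).symm

theorem weakConn_mul_left_iff (hl : l ∈ L) :
    WeakConn L R (l * g) (l * h) ↔ WeakConn L R g h :=
  ⟨fun hlgh => by simpa using hlgh.inv_mul_left hl, fun hgh => hgh.mul_left hl⟩

theorem weakConn_pow_mul_left_iff (hl : l ∈ L) (n : ℕ) :
    WeakConn L R (l ^ n * g) (l ^ n * h) ↔ WeakConn L R g h := by
  induction n with
  | zero => simp
  | succ n ih => rw [pow_succ', mul_assoc, mul_assoc, weakConn_mul_left_iff hl, ih]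

theorem weakConn_pow_sub_one_of_le (hl : l ∈ L) {m n : ℕ} (hmn : m ≤ n)
    (hlmn : WeakConn L R (l ^ m) (l ^ n)) : WeakConn L R (l ^ (n - m)) 1 := by
  rw [← Nat.add_sub_cancel' hmn, pow_add, ← mul_one (l ^ m), mul_assoc, one_mul,
    weakConn_pow_mul_left_iff hl] at hlmn
  exact hlmn.symm

theorem weakConn_inv_pow_one_iff (hl : l ∈ L) (n : ℕ) :
    WeakConn L R (l⁻¹ ^ n) 1 ↔ WeakConn L R (l ^ n) 1 := by
  rw [← weakConn_pow_mul_left_iff hl n (g := l⁻¹ ^ n), inv_pow, mul_inv_cancel, mul_one]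
  exact ⟨WeakConn.symm, WeakConn.symm⟩

theorem IsWord.pow {S : Set G} {s : G} (hs : s ∈ S) (n : ℕ) : IsWord S n (s ^ n) :=
  ⟨List.replicate n s, List.length_replicate .., fun _ hx => List.eq_of_mem_replicate hx ▸ hs,
    List.prod_replicate ..⟩

theorem weakConn_mul_mul_pow_of_isWord {S : Set G} {c w : G} {n : ℕ}
    (hS : ∀ s ∈ S, ∀ x, WeakConn L R (s * x) (x * c)) (hw : IsWord S n w) (z : G) :
    WeakConn L R (w * z) (z * c ^ n) := by
  obtain ⟨ws, rfl, hws, rfl⟩ := hw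
  induction ws generalizing z with
  | nil => simpa using WeakConn.refl z
  | cons a ws ih =>
    calc WeakConn L R ((a :: ws).prod * z) (ws.prod * z * c) := by
          rw [List.prod_cons, mul_assoc]; exact hS a (hws a List.mem_cons_self) _
      _ = ws.prod * (z * c) := mul_assoc ..
      WeakConn L R _ (z * c * c ^ ws.length) :=
          ih (z * c) fun x hx => hws x (List.mem_cons_of_mem _ hx)
      _ = z * c ^ (a :: ws).length := by rw [List.length_cons, pow_succ', mul_assoc]

theorem weakConn_of_isWord_of_isWord {S : Set G} {c u v : G} {n : ℕ}
    (hS : ∀ s ∈ S, ∀ x, WeakConn L R (s * x) (x * c)) (hu : IsWord S n u)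
    (hv : IsWord S n v) : WeakConn L R u v := by
  simpa using (weakConn_mul_mul_pow_of_isWord hS hu 1).trans
    (weakConn_mul_mul_pow_of_isWord hS hv 1).symm

theorem weakConn_pow_of_isWord (hl : l ∈ L) (hr : r ∈ R) {n : ℕ} {w : G} (hw : IsWord L n w) :
    WeakConn L R w (l ^ n) :=
  weakConn_of_isWord_of_isWord (fun _ hs x => weakConn_mul_left_mul_right hs hr x) hw
    (.pow hl n)

theorem weakConn_inv_pow_of_isWord_inv (hl : l ∈ L) (hr : r ∈ R) {n : ℕ} {w : G}
    (hw : IsWord L⁻¹ n w) : WeakConn L R w (l⁻¹ ^ n) :=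
  weakConn_of_isWord_of_isWord
    (fun s hs x => by
      simpa using weakConn_inv_mul_left_mul_inv_right (Set.mem_inv.mp hs) hr x) hw
    (.pow (Set.inv_mem_inv.mpr hl) n)

end

theorem stmt_7 {G : Type*} [Group G] (L R : Set G) (hL : L.Nonempty) (hR : R.Nonempty) :
    ((∃ m n : ℕ, ∃ u v : G, m ≠ n ∧ 0 < m ∧ 0 < n ∧
        IsWord L m u ∧ IsWord L n v ∧ WeakConn L R u v) ↔
      (∃ n : ℕ, 0 < n ∧ ∃ w : G, IsWord L n w ∧ WeakConn L R w 1)) ∧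
    (∀ n : ℕ, 0 < n →
      ((∃ w : G, IsWord L n w ∧ WeakConn L R w 1) ↔
       (∃ w : G, IsWord L⁻¹ n w ∧ WeakConn L R w 1))) := by
  obtain ⟨l, hl⟩ := hL
  obtain ⟨r, hr⟩ := hR
  have hlr {n : ℕ} {w : G} (hw : IsWord L n w) := weakConn_pow_of_isWord hl hr hw
  refine ⟨⟨?_, ?_⟩, fun n _ => ⟨?_, ?_⟩⟩
  · rintro ⟨m, n, u, v, hmn, -, -, hu, hv, huv⟩
    have hlmn : WeakConn L R (l ^ m) (l ^ n) := (hlr hu).symm.trans (huv.trans (hlr hv))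
    rcases hmn.lt_or_gt with hlt | hlt
    · exact ⟨n - m, by omega, _, .pow hl _, weakConn_pow_sub_one_of_le hl hlt.le hlmn⟩
    · exact ⟨m - n, by omega, _, .pow hl _, weakConn_pow_sub_one_of_le hl hlt.le hlmn.symm⟩
  · rintro ⟨n, hn, w, hw, hw1⟩
    have hln : WeakConn L R (l ^ n * l ^ n) (l ^ n * 1) :=
      (weakConn_pow_mul_left_iff hl n).2 ((hlr hw).symm.trans hw1)
    refine ⟨n + n, n, _, _, by omega, by omega, hn, .pow hl _, .pow hl _, ?_⟩
    rwa [mul_one, ← pow_add] at hln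
  · rintro ⟨w, hw, hw1⟩
    exact ⟨_, .pow (Set.inv_mem_inv.mpr hl) n,
      (weakConn_inv_pow_one_iff hl n).2 ((hlr hw).symm.trans hw1)⟩
  · rintro ⟨w, hw, hw1⟩
    have hw' := weakConn_inv_pow_of_isWord_inv hl hr hw
    exact ⟨_, .pow hl n, (weakConn_inv_pow_one_iff hl n).1 (hw'.symm.trans hw1)⟩
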